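/- For every standard sentence s in the language of T: if T proves ¬D(E_s(v)), then T proves remote(⁰⌜s⌝); and if T proves D(E_s(v)), then T proves ¬remote(⁰⌜s⌝). -/

import Mathlib

open FirstOrder FirstOrder.Language

namespace GodelStalk

/-- Function symbols of the first-order language of arithmetic:
zero, successor, addition, multiplication. -/
inductive ArithFunc : ℕ → Type
  | zero : ArithFunc 0
  | succ : ArithFunc 1
  | add : ArithFunc 2
  | mul : ArithFunc 2

/-- Relation symbols of the first-order language of arithmetic: `≤`. -/
inductive ArithRel : ℕ → Type
  | le : ArithRel 2

/-- The first-order language of arithmetic. -/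
def Larith : FirstOrder.Language := ⟨ArithFunc, ArithRel⟩

/-- The numeral `⁰n`: `n`-many repeated applications of the successor symbol to zero. -/
def num {α : Type} : ℕ → Larith.Term α
  | 0 => Term.func ArithFunc.zero ![]
  | n + 1 => Term.func ArithFunc.succ ![num n]

/-- Successor term. -/
def succT {α : Type} (t : Larith.Term α) : Larith.Term α :=
  Term.func ArithFunc.succ ![t]

/-- Addition term. -/
def addT {α : Type} (t u : Larith.Term α) : Larith.Term α :=
  Term.func ArithFunc.add ![t, u]

/-- Multiplication term. -/
def mulT {α : Type} (t u : Larith.Term α) : Larith.Term α :=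
  Term.func ArithFunc.mul ![t, u]

/-- The formula `t ≤ u`. -/
def leF {α : Type} (t u : Larith.Term α) : Larith.Formula α :=
  Relations.formula₂ ArithRel.le t u

/-- The formula `t < u`, rendered as `S t ≤ u`. -/
def ltF {α : Type} (t u : Larith.Term α) : Larith.Formula α :=
  leF (succT t) u

/-- Universal quantification over one extra variable. -/
noncomputable def all1 {α : Type} (φ : Larith.Formula (α ⊕ Fin 1)) : Larith.Formula α :=
  Formula.iAlls (Fin 1) φ

/-- Existential quantification over one extra variable. -/
noncomputable def ex1 {α : Type} (φ : Larith.Formula (α ⊕ Fin 1)) : Larith.Formula α :=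
  Formula.iExs (Fin 1) φ

/-- Substitute a term for the unique free variable of a formula. -/
def app1 {α : Type} (φ : Larith.Formula (Fin 1)) (t : Larith.Term α) : Larith.Formula α :=
  φ.subst fun _ => t

/-- Substitute two terms for the two free variables of a formula. -/
def app2 {α : Type} (φ : Larith.Formula (Fin 2)) (t u : Larith.Term α) : Larith.Formula α :=
  φ.subst ![t, u]

/-- Substitute a term for the distinguished (`Sum.inr`) free variable of a formula. -/
def substLast {α : Type} (φ : Larith.Formula (α ⊕ Fin 1)) (t : Larith.Term α) :
    Larith.Formula α :=
  φ.subst (Sum.elim Term.var fun _ => t)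

/-- `isMinOf φ t` expresses `t = min z : φ(z)`, i.e. `φ(t) ∧ ∀ w < t, ¬φ(w)`. -/
noncomputable def isMinOf {α : Type} (φ : Larith.Formula (α ⊕ Fin 1)) (t : Larith.Term α) :
    Larith.Formula α :=
  substLast φ t ⊓ all1 (ltF (Term.var (Sum.inr 0)) (t.relabel Sum.inl) ⟹ ∼φ)

/-- `minProofOf pf c t` expresses `t = min z : pf(z, c)`. -/
noncomputable def minProofOf {α : Type} (pf : Larith.Formula (Fin 2)) (c t : Larith.Term α) :
    Larith.Formula α :=
  isMinOf (app2 pf (Term.var (Sum.inr 0)) (c.relabel Sum.inl)) t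

/-- Provability within the theory `T` (semantic consequence, which by the Gödel
completeness theorem coincides with first-order provability). -/
def Proves (T : Larith.Theory) (φ : Larith.Sentence) : Prop :=
  T ⊨ᵇ φ

/-- `T` is consistent. -/
def Consistent (T : Larith.Theory) : Prop :=
  ¬ Proves T ⊥

/-- `T` is complete: it decides every sentence. -/
def Complete (T : Larith.Theory) : Prop :=
  ∀ φ : Larith.Sentence, Proves T φ ∨ Proves T (∼φ)

/-- Universal closure over `Fin k`-many free variables. -/
noncomputable def closure {k : ℕ} (φ : Larith.Formula (Fin k)) : Larith.Sentence :=
  Formula.iAlls (Fin k) (φ.relabel Sum.inr : Larith.Formula (Empty ⊕ Fin k))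

/-- The axioms of Robinson arithmetic `Q` (with `≤` defined from addition). -/
noncomputable def QTheory : Larith.Theory :=
  { closure (∼(Term.equal (succT (Term.var (0 : Fin 1))) (num 0))),
    closure (Term.equal (succT (Term.var (0 : Fin 2))) (succT (Term.var 1)) ⟹
      Term.equal (Term.var 0) (Term.var (1 : Fin 2))),
    closure (∼(Term.equal (Term.var (0 : Fin 1)) (num 0)) ⟹
      ex1 (Term.equal (Term.var (Sum.inl 0)) (succT (Term.var (Sum.inr (0 : Fin 1)))) :
        Larith.Formula (Fin 1 ⊕ Fin 1))),
    closure (Term.equal (addT (Term.var (0 : Fin 1)) (num 0)) (Term.var 0)),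
    closure (Term.equal (addT (Term.var (0 : Fin 2)) (succT (Term.var 1)))
      (succT (addT (Term.var 0) (Term.var (1 : Fin 2))))),
    closure (Term.equal (mulT (Term.var (0 : Fin 1)) (num 0)) (num 0)),
    closure (Term.equal (mulT (Term.var (0 : Fin 2)) (succT (Term.var 1)))
      (addT (mulT (Term.var 0) (Term.var 1)) (Term.var (0 : Fin 2)))),
    closure ((leF (Term.var (0 : Fin 2)) (Term.var 1)) ⇔
      ex1 (Term.equal (addT (Term.var (Sum.inr (0 : Fin 1))) (Term.var (Sum.inl 0)))
        (Term.var (Sum.inl (1 : Fin 2))))) }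

/-- The induction axiom for a formula `φ` with parameters `Fin k` and induction
variable the distinguished `Sum.inr` variable. -/
noncomputable def inductionSentence {k : ℕ} (φ : Larith.Formula (Fin k ⊕ Fin 1)) :
    Larith.Sentence :=
  closure ((substLast φ (num 0) ⊓
      all1 (φ ⟹ φ.subst (Sum.elim (Term.var ∘ Sum.inl)
        fun _ => succT (Term.var (Sum.inr 0))))) ⟹
    all1 φ)

/-- Peano Arithmetic: Robinson arithmetic together with the induction scheme. -/
noncomputable def PATheory : Larith.Theory :=
  QTheory ∪ { σ | ∃ (k : ℕ) (φ : Larith.Formula (Fin k ⊕ Fin 1)), σ = inductionSentence φ }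


/-! ### The extension `E_s(v)`, `remote`, and `𝔎` (minimality version) -/

/-- `extFormulaAt pf c t` is the extension formula `E_s` of the sentence `s` with
Gödel code `c`, evaluated at the term `t`:
`∀x ∀y (Proof_T(x, t) ∧ [y = min z : Proof_T(z, ⁰c)] → x ≥ y)`. -/
noncomputable def extFormulaAt {α : Type} (pf : Larith.Formula (Fin 2)) (c : ℕ)
    (t : Larith.Term α) : Larith.Formula α :=
  Formula.iAlls (Fin 2)
    ((app2 pf (Term.var (Sum.inr 0)) (t.relabel Sum.inl) ⊓
        minProofOf pf (num c) (Term.var (Sum.inr 1))) ⟹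
      leF (Term.var (Sum.inr 1)) (Term.var (Sum.inr 0)))

/-- The extension `E_s(v)` of the sentence `s` with Gödel code `c`, as a formula
in the single free variable `v`. -/
noncomputable def extFormula (pf : Larith.Formula (Fin 2)) (c : ℕ) :
    Larith.Formula (Fin 1) :=
  extFormulaAt pf c (Term.var 0)

/-- `remoteAt pf dgn t` is the formula `remote(t)`:
`∃x ∃k ∃z (Dgn(x, t) ∧ k = min n : Proof_T(n, t) ∧ z = min m : Proof_T(m, x) ∧ z < k)`. -/
noncomputable def remoteAt {α : Type} (pf dgn : Larith.Formula (Fin 2))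
    (t : Larith.Term α) : Larith.Formula α :=
  Formula.iExs (Fin 3)
    (app2 dgn (Term.var (Sum.inr 0)) (t.relabel Sum.inl) ⊓
      minProofOf pf (t.relabel Sum.inl) (Term.var (Sum.inr 1)) ⊓
      minProofOf pf (Term.var (Sum.inr 0)) (Term.var (Sum.inr 2)) ⊓
      ltF (Term.var (Sum.inr 2)) (Term.var (Sum.inr 1)))

/-- `∃y (remote(y) ∧ Proof_T(t, y))` : `t` is (the code of) a proof of a remote sentence. -/
noncomputable def provesRemoteAt {α : Type} (pf dgn : Larith.Formula (Fin 2))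
    (t : Larith.Term α) : Larith.Formula α :=
  ex1 (remoteAt pf dgn (Term.var (Sum.inr 0)) ⊓
    app2 pf (t.relabel Sum.inl) (Term.var (Sum.inr 0)))

/-- `isKAt pf dgn t` is the defining condition `t = 𝔎`, that is,
`t = min k : ∃y (remote(y) ∧ Proof_T(k, y))`. -/
noncomputable def isKAt {α : Type} (pf dgn : Larith.Formula (Fin 2))
    (t : Larith.Term α) : Larith.Formula α :=
  isMinOf (provesRemoteAt pf dgn (Term.var (Sum.inr 0))) t

/-- `geqKAt pf dgn t` expresses `t ≥ 𝔎`: `∀w (w = 𝔎 → w ≤ t)`. -/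
noncomputable def geqKAt {α : Type} (pf dgn : Larith.Formula (Fin 2))
    (t : Larith.Term α) : Larith.Formula α :=
  all1 (isKAt pf dgn (Term.var (Sum.inr 0)) ⟹
    leF (Term.var (Sum.inr 0)) (t.relabel Sum.inl))

/-- A bundle of the standard arithmetization data for the recursively axiomatized
theory `T`: Gödel's arithmetized proof predicate `ProofF` (i.e. `Proof_T`), a Gödel
coding `code` of sentences, Rosser's arithmetized negation function `negfn`, and the
syntactic diagonalization operator `diag` (satisfying the diagonal lemma). -/
structure GodelSetting (T : Larith.Theory) : Type where
  /-- Gödel's arithmetized provability predicate `Proof_T(x, y)`. -/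
  ProofF : Larith.Formula (Fin 2)
  /-- The arithmetical formula `Dgn(x, y)`. -/
  DgnF : Larith.Formula (Fin 2)
  /-- Gödel coding of sentences. -/
  code : Larith.Sentence → ℕ
  /-- Rosser's arithmetized negation function. -/
  negfn : ℕ → ℕ
  /-- The syntactic diagonalization `φ(v) ↦ D(φ(v))`. -/
  diag : Larith.Formula (Fin 1) → Larith.Sentence
  /-- The diagonal lemma: `T ⊢ D(φ) ↔ φ(⁰⌜D(φ)⌝)`. -/
  diag_spec : ∀ φ : Larith.Formula (Fin 1),
    Proves T (diag φ ⇔ app1 φ (num (code (diag φ))))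
  /-- If `T ⊢ s` then some standard natural number codes a proof of `s`. -/
  proof_complete : ∀ s : Larith.Sentence, Proves T s →
    ∃ n : ℕ, Proves T (app2 ProofF (num n) (num (code s)))
  /-- Conversely, a standardly coded internal proof of `s` yields `T ⊢ s`. -/
  proof_sound : ∀ (s : Larith.Sentence) (n : ℕ),
    Proves T (app2 ProofF (num n) (num (code s))) → Proves T s
  /-- `Proof_T` is a decidable (Δ₁) predicate on standard naturals. -/
  proof_decide : ∀ n m : ℕ,
    Proves T (app2 ProofF (num n) (num m)) ∨ Proves T (∼(app2 ProofF (num n) (num m)))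
  /-- `negfn` sends the code of a sentence to the code of its negation. -/
  negfn_spec : ∀ s : Larith.Sentence, negfn (code s) = code (∼s)

/-- The formula `Dgn(x, y)` represents in `T` the computable map sending the Gödel
code of a sentence `s` to the Gödel code of the diagonal sentence `D(E_s(v))` of
its extension: `T ⊢ Dgn(⁰⌜D(E_s(v))⌝, ⁰⌜s⌝)` and
`T ⊢ ∀x (Dgn(x, ⁰⌜s⌝) → x = ⁰⌜D(E_s(v))⌝)`. -/
def DgnRepresents (T : Larith.Theory) (G : GodelSetting T) : Prop :=
  (∀ s : Larith.Sentence,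
    Proves T (app2 G.DgnF (num (G.code (G.diag (extFormula G.ProofF (G.code s)))))
      (num (G.code s)))) ∧
  (∀ s : Larith.Sentence,
    Proves T (all1 (app2 G.DgnF (Term.var (Sum.inr 0)) (num (G.code s)) ⟹
      Term.equal (Term.var (Sum.inr 0))
        (num (G.code (G.diag (extFormula G.ProofF (G.code s))))))))

/-! Work in an arbitrary model `M` of `T`, with `c = ⌜s⌝` and `d = ⌜D(E_s(v))⌝`. By the diagonal
lemma, `D(E_s(v))` holds in `M` iff no proof of `d` lies below the least proof `y` of `c`.
If it fails, some proof `x` of `d` has `x < y`, the least number principle of `PA` yields a least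
proof `z ≤ x` of `d`, and `Dgn(d, c)` makes `d` the witness of `remote(c)`. If it holds, the
uniqueness half of the representation of `Dgn` forces every witness of `remote(c)` to be `d`,
whose least proof is then not below `y`. -/

section Semantics

variable {M : Type} [Larith.Structure M] {α : Type}

def zeroM : M := Structure.funMap (L := Larith) ArithFunc.zero ![]

def succM (a : M) : M := Structure.funMap (L := Larith) ArithFunc.succ ![a]

def addM (a b : M) : M := Structure.funMap (L := Larith) ArithFunc.add ![a, b]

def LeM (a b : M) : Prop := Structure.RelMap (L := Larith) ArithRel.le ![a, b]

def LtM (a b : M) : Prop := LeM (succM a) b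

def numVal : ℕ → M
  | 0 => zeroM
  | n + 1 => succM (numVal n)

@[simp] lemma numVal_zero : (numVal 0 : M) = zeroM := rfl

def Realize₂ (φ : Larith.Formula (Fin 2)) (a b : M) : Prop := φ.Realize ![a, b]

def IsMinProof (pf : Larith.Formula (Fin 2)) (c n : M) : Prop :=
  Realize₂ pf n c ∧ ∀ w, LtM w n → ¬ Realize₂ pf w c

def IsRemote (pf dgn : Larith.Formula (Fin 2)) (c : M) : Prop :=
  ∃ x k z : M, Realize₂ dgn x c ∧ IsMinProof pf c k ∧ IsMinProof pf x z ∧ LtM z k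

def push (v : α → M) (a : M) : α ⊕ Fin 1 → M := Sum.elim v fun _ => a

omit [Larith.Structure M] in
lemma sum_elim_eq_push (v : α → M) (i : Fin 1 → M) : Sum.elim v i = push v (i 0) := by
  funext x
  cases x with
  | inl b => rfl
  | inr b => rw [Fin.fin_one_eq_zero b]; rfl

@[simp] lemma realize_num (v : α → M) (n : ℕ) :
    (num n : Larith.Term α).realize v = numVal n := by
  induction n with
  | zero =>
    rw [num]
    erw [Term.realize_func]
    rw [numVal, zeroM]
    congr
    funext i
    exact i.elim0
  | succ n ih =>
    rw [num]
    erw [Term.realize_func]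
    rw [numVal, succM, ← ih]
    congr
    funext i
    fin_cases i
    rfl

@[simp] lemma realize_succT (v : α → M) (t : Larith.Term α) :
    (succT t).realize v = succM (t.realize v) := by
  rw [succT]
  erw [Term.realize_func]
  rw [succM]
  congr
  funext i
  fin_cases i
  rfl

@[simp] lemma realize_addT (v : α → M) (t u : Larith.Term α) :
    (addT t u).realize v = addM (t.realize v) (u.realize v) := by
  rw [addT]
  erw [Term.realize_func]
  rw [addM]
  congr
  funext i
  fin_cases i <;> rfl

@[simp] lemma realize_leF (v : α → M) (t u : Larith.Term α) :
    (leF t u).Realize v ↔ LeM (t.realize v) (u.realize v) := by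
  rw [leF]
  erw [Formula.realize_rel₂]
  rfl

@[simp] lemma realize_ltF (v : α → M) (t u : Larith.Term α) :
    (ltF t u).Realize v ↔ LtM (t.realize v) (u.realize v) := by
  rw [ltF, realize_leF, realize_succT]
  rfl

@[simp] lemma realize_all1 (v : α → M) (φ : Larith.Formula (α ⊕ Fin 1)) :
    (all1 φ).Realize v ↔ ∀ a : M, φ.Realize (push v a) := by
  rw [all1, Formula.realize_iAlls]
  exact ⟨fun h a => h fun _ => a, fun h i => sum_elim_eq_push v i ▸ h (i 0)⟩

@[simp] lemma realize_ex1 (v : α → M) (φ : Larith.Formula (α ⊕ Fin 1)) :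
    (ex1 φ).Realize v ↔ ∃ a : M, φ.Realize (push v a) := by
  rw [ex1, Formula.realize_iExs]
  exact ⟨fun ⟨i, h⟩ => ⟨i 0, sum_elim_eq_push v i ▸ h⟩, fun ⟨a, h⟩ => ⟨fun _ => a, h⟩⟩

@[simp] lemma realize_app1 (v : α → M) (φ : Larith.Formula (Fin 1)) (t : Larith.Term α) :
    (app1 φ t).Realize v ↔ φ.Realize fun _ => t.realize v :=
  BoundedFormula.realize_subst

@[simp] lemma realize_app2 (v : α → M) (φ : Larith.Formula (Fin 2)) (t u : Larith.Term α) :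
    (app2 φ t u).Realize v ↔ Realize₂ φ (t.realize v) (u.realize v) := by
  have hval : (fun i => (![t, u] i).realize v) = ![t.realize v, u.realize v] := by
    funext i
    fin_cases i <;> rfl
  rw [app2, Formula.Realize, BoundedFormula.realize_subst, hval]
  rfl

@[simp] lemma realize_substLast (v : α → M) (φ : Larith.Formula (α ⊕ Fin 1))
    (t : Larith.Term α) :
    (substLast φ t).Realize v ↔ φ.Realize (push v (t.realize v)) := by
  have hval : (fun x => (Sum.elim Term.var (fun _ => t) x).realize v) =
      push v (t.realize v) := by
    funext x
    cases x <;> rfl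
  rw [substLast, Formula.Realize, BoundedFormula.realize_subst, hval]
  rfl

lemma realize_isMinOf (v : α → M) (φ : Larith.Formula (α ⊕ Fin 1)) (t : Larith.Term α) :
    (isMinOf φ t).Realize v ↔ φ.Realize (push v (t.realize v)) ∧
      ∀ w : M, LtM w (t.realize v) → ¬ φ.Realize (push v w) := by
  simp only [isMinOf, Formula.realize_inf, realize_substLast, realize_all1,
    Formula.realize_imp, Formula.realize_not, realize_ltF, Term.realize_relabel]
  rfl

@[simp] lemma realize_minProofOf (v : α → M) (pf : Larith.Formula (Fin 2))
    (c t : Larith.Term α) :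
    (minProofOf pf c t).Realize v ↔ IsMinProof pf (c.realize v) (t.realize v) := by
  simp only [minProofOf, realize_isMinOf, realize_app2, Term.realize_relabel]
  rfl

lemma realize_extFormulaAt (v : α → M) (pf : Larith.Formula (Fin 2)) (c : ℕ)
    (t : Larith.Term α) :
    (extFormulaAt pf c t).Realize v ↔
      ∀ x y : M, Realize₂ pf x (t.realize v) → IsMinProof pf (numVal c) y → LeM y x := by
  rw [extFormulaAt, Formula.realize_iAlls]
  simp only [Formula.realize_imp, Formula.realize_inf, realize_app2, realize_minProofOf,
    realize_leF, Term.realize_relabel, realize_num]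
  exact ⟨fun h x y hx hy => h ![x, y] ⟨hx, hy⟩, fun h i hi => h (i 0) (i 1) hi.1 hi.2⟩

lemma realize_remoteAt (v : α → M) (pf dgn : Larith.Formula (Fin 2)) (t : Larith.Term α) :
    (remoteAt pf dgn t).Realize v ↔ IsRemote pf dgn (t.realize v) := by
  rw [remoteAt, Formula.realize_iExs]
  simp only [Formula.realize_inf, realize_app2, realize_minProofOf, realize_ltF,
    Term.realize_relabel, and_assoc]
  exact ⟨fun ⟨i, h⟩ => ⟨i 0, i 1, i 2, h⟩, fun ⟨x, k, z, h⟩ => ⟨![x, k, z], h⟩⟩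

lemma realize_closure {k : ℕ} (φ : Larith.Formula (Fin k)) :
    M ⊨ closure φ ↔ ∀ i : Fin k → M, φ.Realize i := by
  rw [closure, Sentence.Realize, Formula.realize_iAlls]
  exact forall_congr' fun i => Formula.realize_relabel

end Semantics
namespace PAModel

variable {M : Type} [Larith.Structure M] (hM : M ⊨ PATheory)
include hM

lemma realize_of_closure_mem_QTheory {k : ℕ} {φ : Larith.Formula (Fin k)}
    (hmem : closure φ ∈ QTheory) (i : Fin k → M) : φ.Realize i :=
  (realize_closure φ).1 (hM.realize_of_mem _ (Set.mem_union_left _ hmem)) i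

lemma succM_ne_zeroM (a : M) : succM a ≠ zeroM := by
  simpa using realize_of_closure_mem_QTheory hM (Or.inl rfl) fun _ => a

lemma succM_injective : Function.Injective (succM : M → M) := fun a b => by
  simpa using realize_of_closure_mem_QTheory hM (Or.inr <| Or.inl rfl) ![a, b]

lemma exists_eq_succM_of_ne_zeroM {a : M} (ha : a ≠ zeroM) : ∃ b, a = succM b := by
  simpa [push, ha] using realize_of_closure_mem_QTheory hM (Or.inr <| Or.inr <| Or.inl rfl) fun _ => a

lemma addM_zeroM (a : M) : addM a zeroM = a := by
  simpa using realize_of_closure_mem_QTheory hM (Or.inr <| Or.inr <| Or.inr <| Or.inl rfl) fun _ => a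

lemma addM_succM (a b : M) : addM a (succM b) = succM (addM a b) := by
  simpa using realize_of_closure_mem_QTheory hM (Or.inr <| Or.inr <| Or.inr <| Or.inr <| Or.inl rfl) ![a, b]

lemma leM_iff_exists_addM (a b : M) : LeM a b ↔ ∃ w, addM w a = b := by
  simpa [push] using realize_of_closure_mem_QTheory hM (Or.inr <| Or.inr <| Or.inr <| Or.inr <| Or.inr <| Or.inr <| Or.inr rfl) ![a, b]


@[elab_as_elim]
lemma definable_induction {k : ℕ} (φ : Larith.Formula (Fin k ⊕ Fin 1)) (p : Fin k → M)
    {P : M → Prop} (hφ : ∀ a, φ.Realize (push p a) ↔ P a) (zero : P zeroM)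
    (succ : ∀ a, P a → P (succM a)) (a : M) : P a := by
  have hstep : ∀ b, Formula.Realize (φ.subst (Sum.elim (Term.var ∘ Sum.inl)
      fun _ => succT (Term.var (Sum.inr 0)))) (push p b) ↔
      φ.Realize (push p (succM b)) := by
    intro b
    have hval : (fun x => ((Sum.elim (Term.var ∘ Sum.inl)
        fun _ => succT (Term.var (Sum.inr 0))) x).realize (push p b)) = push p (succM b) := by
      funext x
      cases x <;> simp [push]
    rw [Formula.Realize, BoundedFormula.realize_subst, hval]
    rfl
  have hind := (realize_closure _).1
    (hM.realize_of_mem _ (Set.mem_union_right _ ⟨k, φ, rfl⟩ : inductionSentence φ ∈ PATheory)) p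
  simp only [Formula.realize_imp, Formula.realize_inf, realize_substLast, realize_all1,
    realize_num, numVal_zero, hstep, hφ] at hind
  exact hind ⟨zero, succ⟩ a

lemma zeroM_addM (a : M) : addM zeroM a = a := by
  refine definable_induction hM (k := 0)
    (Term.equal (addT (num 0) (Term.var (Sum.inr 0))) (Term.var (Sum.inr 0))) Fin.elim0
    (fun a => by simp [push]) (addM_zeroM hM _) (fun b ih => ?_) a
  rw [addM_succM hM, ih]

lemma succM_addM (a b : M) : addM (succM a) b = succM (addM a b) := by
  refine definable_induction hM (k := 1) (Term.equal
    (addT (succT (Term.var (Sum.inl 0))) (Term.var (Sum.inr 0)))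
    (succT (addT (Term.var (Sum.inl 0)) (Term.var (Sum.inr 0))))) (fun _ => a)
    (fun b => by simp [push]) ?_ (fun c ih => ?_) b
  · rw [addM_zeroM hM, addM_zeroM hM]
  · rw [addM_succM hM, addM_succM hM, ih]

lemma addM_assoc (a b c : M) : addM (addM a b) c = addM a (addM b c) := by
  refine definable_induction hM (k := 2) (Term.equal
    (addT (addT (Term.var (Sum.inl 0)) (Term.var (Sum.inl 1))) (Term.var (Sum.inr 0)))
    (addT (Term.var (Sum.inl 0)) (addT (Term.var (Sum.inl 1)) (Term.var (Sum.inr 0)))))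
    ![a, b] (fun c => by simp [push]) ?_ (fun d ih => ?_) c
  · rw [addM_zeroM hM, addM_zeroM hM]
  · rw [addM_succM hM, addM_succM hM, addM_succM hM, ih]

lemma leM_refl (a : M) : LeM a a :=
  (leM_iff_exists_addM hM a a).2 ⟨zeroM, zeroM_addM hM a⟩

lemma leM_trans {a b c : M} (hab : LeM a b) (hbc : LeM b c) : LeM a c := by
  obtain ⟨u, rfl⟩ := (leM_iff_exists_addM hM a b).1 hab
  obtain ⟨w, rfl⟩ := (leM_iff_exists_addM hM _ c).1 hbc
  exact (leM_iff_exists_addM hM _ _).2 ⟨addM w u, addM_assoc hM w u a⟩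

lemma succM_leM_succM_iff {a b : M} : LeM (succM a) (succM b) ↔ LeM a b := by
  simp only [leM_iff_exists_addM hM, addM_succM hM, (succM_injective hM).eq_iff]

lemma ltM_of_leM_of_ltM {a b c : M} (hab : LeM a b) (hbc : LtM b c) : LtM a c :=
  leM_trans hM ((succM_leM_succM_iff hM).2 hab) hbc

lemma eq_or_ltM_of_leM {a b : M} (h : LeM a b) : a = b ∨ LtM a b := by
  obtain ⟨u, rfl⟩ := (leM_iff_exists_addM hM _ _).1 h
  by_cases hu0 : u = zeroM
  · exact .inl (by rw [hu0, zeroM_addM hM])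
  · obtain ⟨u', rfl⟩ := exists_eq_succM_of_ne_zeroM hM hu0
    exact .inr ((leM_iff_exists_addM hM _ _).2 ⟨u', by rw [addM_succM hM, succM_addM hM]⟩)

lemma leM_succM_iff {a b : M} : LeM a (succM b) ↔ LeM a b ∨ a = succM b := by
  refine ⟨fun h => (eq_or_ltM_of_leM hM h).symm.imp (succM_leM_succM_iff hM).1 id, ?_⟩
  rintro (h | rfl)
  · obtain ⟨u, rfl⟩ := (leM_iff_exists_addM hM _ _).1 h
    exact (leM_iff_exists_addM hM _ _).2 ⟨succM u, succM_addM hM u a⟩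
  · exact leM_refl hM _

lemma eq_zeroM_of_leM_zeroM {a : M} (h : LeM a zeroM) : a = zeroM := by
  by_contra ha
  obtain ⟨b, rfl⟩ := exists_eq_succM_of_ne_zeroM hM ha
  obtain ⟨w, hw⟩ := (leM_iff_exists_addM hM _ _).1 h
  exact succM_ne_zeroM hM _ (addM_succM hM w b ▸ hw)

lemma not_ltM_zeroM (a : M) : ¬ LtM a zeroM :=
  fun h => succM_ne_zeroM hM a (eq_zeroM_of_leM_zeroM hM h)

lemma not_ltM_self (a : M) : ¬ LtM a a := by
  refine definable_induction hM (k := 0)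
    (∼(ltF (Term.var (Sum.inr 0)) (Term.var (Sum.inr 0)))) Fin.elim0
    (fun a => by simp [push]) (not_ltM_zeroM hM zeroM) (fun b ih h => ?_) a
  exact ih ((succM_leM_succM_iff hM).1 h)

lemma not_leM_of_ltM {a b : M} (hab : LtM a b) : ¬ LeM b a :=
  fun hba => not_ltM_self hM a (leM_trans hM hab hba)

lemma leM_or_ltM (a b : M) : LeM a b ∨ LtM b a := by
  refine definable_induction hM (k := 1)
    (leF (Term.var (Sum.inl 0)) (Term.var (Sum.inr 0)) ⊔
      ltF (Term.var (Sum.inr 0)) (Term.var (Sum.inl 0))) (fun _ => a)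
    (fun b => by simp [push]) ?_ (fun c ih => ?_) b
  · by_cases ha : a = zeroM
    · exact .inl (ha ▸ leM_refl hM zeroM)
    · obtain ⟨a', rfl⟩ := exists_eq_succM_of_ne_zeroM hM ha
      exact .inr ((succM_leM_succM_iff hM).2 ((leM_iff_exists_addM hM _ _).2
        ⟨a', addM_zeroM hM a'⟩))
  · rcases ih with h | h
    · exact .inl ((leM_succM_iff hM).2 (.inl h))
    · rcases eq_or_ltM_of_leM hM h with rfl | h
      · exact .inl (leM_refl hM _)
      · exact .inr h

lemma exists_isMinProof (pf : Larith.Formula (Fin 2)) {c n : M} (hn : Realize₂ pf n c) :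
    ∃ m, IsMinProof pf c m := by
  by_contra hmin
  have hbelow : ∀ m, Realize₂ pf m c → ∃ w, LtM w m ∧ Realize₂ pf w c := fun m hm => by
    by_contra h
    exact hmin ⟨m, hm, fun w hw hpw => h ⟨w, hw, hpw⟩⟩
  have hnone : ∀ b m, LeM m b → ¬ Realize₂ pf m c := by
    intro b
    refine definable_induction hM (k := 1)
      (all1 (leF (Term.var (Sum.inr 0)) (Term.var (Sum.inl (Sum.inr 0))) ⟹
        ∼(app2 pf (Term.var (Sum.inr 0)) (Term.var (Sum.inl (Sum.inl 0))))))
      (fun _ => c) (fun b => by simp [push]) ?_ ?_ b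
    · intro m hm hpm
      obtain ⟨w, hw, -⟩ := hbelow m hpm
      exact not_ltM_zeroM hM w (eq_zeroM_of_leM_zeroM hM hm ▸ hw)
    · intro b ih m hm hpm
      rcases (leM_succM_iff hM).1 hm with hm | rfl
      · exact ih m hm hpm
      · obtain ⟨w, hw, hpw⟩ := hbelow _ hpm
        exact ih w ((succM_leM_succM_iff hM).1 hw) hpw
  exact hnone n n (leM_refl hM n) hn

end PAModel

section Remote

open PAModel

variable {M : Type} [Larith.Structure M] {pf dgn : Larith.Formula (Fin 2)}

lemma isRemote_of_proof_ltM_minProof (hM : M ⊨ PATheory) {c d x y : M}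
    (hd : Realize₂ dgn d c) (hx : Realize₂ pf x d) (hy : IsMinProof pf c y) (hxy : LtM x y) :
    IsRemote pf dgn c := by
  obtain ⟨z, hz⟩ := exists_isMinProof hM pf hx
  have hzx : LeM z x := (leM_or_ltM hM z x).resolve_right fun hxz => hz.2 x hxz hx
  exact ⟨d, y, z, hd, hy, hz, ltM_of_leM_of_ltM hM hzx hxy⟩

lemma not_isRemote_of_minProof_leM_proof (hM : M ⊨ PATheory) {c d : M}
    (hd : ∀ x, Realize₂ dgn x c → x = d)
    (hext : ∀ x y, Realize₂ pf x d → IsMinProof pf c y → LeM y x) :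
    ¬ IsRemote pf dgn c := by
  rintro ⟨x, k, z, hx, hk, hz, hzk⟩
  obtain rfl := hd x hx
  exact not_leM_of_ltM hM hzk (hext z k hz.1 hk)

end Remote

section Theory

variable {T : Larith.Theory}

lemma Proves.realize {φ : Larith.Sentence} (h : Proves T φ) (M : Theory.ModelType.{0, 0, 0} T) :
    M ⊨ φ :=
  Theory.models_sentence_iff.1 h M

lemma realize_sentence_remoteAt (M : Type) [Larith.Structure M] (pf dgn : Larith.Formula (Fin 2))
    (c : ℕ) : M ⊨ remoteAt pf dgn (num c) ↔ IsRemote pf dgn (numVal c : M) := by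
  rw [Sentence.Realize, realize_remoteAt, realize_num]

lemma GodelSetting.realize_diag_extFormula_iff (G : GodelSetting T) (c : ℕ)
    (M : Theory.ModelType.{0, 0, 0} T) :
    M ⊨ G.diag (extFormula G.ProofF c) ↔ ∀ x y : M,
      Realize₂ G.ProofF x (numVal (G.code (G.diag (extFormula G.ProofF c)))) →
        IsMinProof G.ProofF (numVal c) y → LeM y x := by
  simpa only [Sentence.Realize, Formula.realize_iff, realize_app1, extFormula,
    realize_extFormulaAt, Term.realize_var, realize_num] using (G.diag_spec (extFormula G.ProofF c)).realize M

variable {G : GodelSetting T}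

lemma DgnRepresents.realize_dgn (h : DgnRepresents T G) (M : Theory.ModelType.{0, 0, 0} T)
    (s : Larith.Sentence) :
    Realize₂ G.DgnF (numVal (G.code (G.diag (extFormula G.ProofF (G.code s))))) 
      (numVal (G.code s) : M) := by
  simpa only [Sentence.Realize, realize_app2, realize_num] using (h.1 s).realize M

lemma DgnRepresents.eq_of_realize_dgn (h : DgnRepresents T G) (M : Theory.ModelType.{0, 0, 0} T)
    (s : Larith.Sentence) {x : M} (hx : Realize₂ G.DgnF x (numVal (G.code s))) :
    x = numVal (G.code (G.diag (extFormula G.ProofF (G.code s)))) := by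
  have hunique := (h.2 s).realize M
  simp only [Sentence.Realize, realize_all1, Formula.realize_imp, realize_app2,
    Formula.realize_equal, realize_num] at hunique
  exact hunique x hx

end Theory

theorem statement_1_general (T : Larith.Theory) (hPA : PATheory ⊆ T)
    (G : GodelSetting T) (hdgn : DgnRepresents T G) (s : Larith.Sentence) :
    (Proves T (∼(G.diag (extFormula G.ProofF (G.code s)))) →
      Proves T (remoteAt G.ProofF G.DgnF (num (G.code s)))) ∧
    (Proves T (G.diag (extFormula G.ProofF (G.code s))) →
      Proves T (∼(remoteAt G.ProofF G.DgnF (num (G.code s))))) := by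
  constructor
  · intro hneg
    refine Theory.models_sentence_iff.2 fun M => ?_
    have hM : (M : Type) ⊨ PATheory := M.is_model.mono hPA
    have hD : ¬ M ⊨ G.diag (extFormula G.ProofF (G.code s)) :=
      (Sentence.realize_not M).1 (hneg.realize M)
    rw [G.realize_diag_extFormula_iff] at hD
    push Not at hD
    obtain ⟨x, y, hx, hy, hxy⟩ := hD
    rw [realize_sentence_remoteAt]
    exact isRemote_of_proof_ltM_minProof hM (hdgn.realize_dgn M s) hx hy
      ((PAModel.leM_or_ltM hM y x).resolve_left hxy)
  · intro hpos
    refine Theory.models_sentence_iff.2 fun M => ?_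
    have hM : (M : Type) ⊨ PATheory := M.is_model.mono hPA
    rw [Sentence.realize_not, realize_sentence_remoteAt]
    exact not_isRemote_of_minProof_leM_proof hM (fun _ => hdgn.eq_of_realize_dgn M s)
      ((G.realize_diag_extFormula_iff _ M).1 (hpos.realize M))

/-- For every standard sentence `s` in the language of `T`:
if `T ⊢ ¬D(E_s(v))` then `T ⊢ remote(⁰⌜s⌝)`; and if `T ⊢ D(E_s(v))` then
`T ⊢ ¬remote(⁰⌜s⌝)`. -/
theorem statement_1 (T : Larith.Theory) (hPA : PATheory ⊆ T) (hcon : Consistent T)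
    (G : GodelSetting T) (hdgn : DgnRepresents T G) (s : Larith.Sentence) :
    (Proves T (∼(G.diag (extFormula G.ProofF (G.code s)))) →
      Proves T (remoteAt G.ProofF G.DgnF (num (G.code s)))) ∧
    (Proves T (G.diag (extFormula G.ProofF (G.code s))) →
      Proves T (∼(remoteAt G.ProofF G.DgnF (num (G.code s))))) :=
  statement_1_general T hPA G hdgn s

end GodelStalk
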